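/- arXiv:2012.04318 — 4 statements merged into one kernel-verified Lean document; each statement's English description precedes it below -/
import Mathlib

section
/- Consider the multi-step value iteration: given Qⁱ : Z × U → ℝ with greedy policy μⁱ(z) = argmin_v Qⁱ(z,v), and horizon Hᵢ ≥ 1, define Qⁱ⁺¹(z,a) = L(z,a) + Σ_{l=1}^{Hᵢ−1} γˡ L(z_l, μⁱ(z_l)) + γ^{Hᵢ} Qⁱ(z_{Hᵢ}, μⁱ(z_{Hᵢ})), where z₁ = F(z,a) and z_l = F(z_{l−1}, μⁱ(z_{l−1})) for l > 1. If Q⁰ satisfies Q⁰(z,a) ≥ L(z,a) + γ min_v Q⁰(F(z,a), v) for all (z,a), then for every i and all (z,a): Qⁱ⁺¹(z,a) ≤ L(z,a) + γ min_v Qⁱ(F(z,a), v) ≤ Qⁱ(z,a). In particular, the sequence (Qⁱ) is pointwise nonincreasing. -/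
/-!
Write `T_μ Q (z,a) = L(z,a) + γ Q(F(z,a), μ(F(z,a)))` for the Bellman operator of a policy `μ`.
Unrolling the trajectory shows that the update is `Qⁱ⁺¹ = T_{μⁱ}^{Hᵢ} Qⁱ`. Since `γ ≥ 0`, each `T_μ`
is monotone, so the condition `T_{μⁱ} Qⁱ ≤ Qⁱ` makes `n ↦ T_{μⁱ}^n Qⁱ` nonincreasing, whence
`Qⁱ⁺¹ ≤ T_{μⁱ} Qⁱ ≤ Qⁱ`. The condition propagates: `μⁱ⁺¹` is greedy for `Qⁱ⁺¹`, so
`T_{μⁱ⁺¹} Qⁱ⁺¹ ≤ T_{μⁱ} Qⁱ⁺¹ = T_{μⁱ}^{Hᵢ+1} Qⁱ ≤ T_{μⁱ}^{Hᵢ} Qⁱ = Qⁱ⁺¹`.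
-/

namespace ValueIteration

variable {Z U : Type*} (F : Z → U → Z) (L : Z → U → ℝ) (γ : ℝ)

def policyBellman (μ : Z → U) (Q : Z → U → ℝ) : Z → U → ℝ :=
  fun z a => L z a + γ * Q (F z a) (μ (F z a))

variable {F L γ}

lemma monotone_policyBellman (hγ : 0 ≤ γ) (μ : Z → U) : Monotone (policyBellman F L γ μ) :=
  fun _ _ hQ z a => by
    unfold policyBellman
    gcongr
    exact hQ _ _

lemma policyBellman_le_of_greedy (hγ : 0 ≤ γ) {Q : Z → U → ℝ} {μ' : Z → U}
    (hgreedy : ∀ z v, Q z (μ' z) ≤ Q z v) (μ : Z → U) :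
    policyBellman F L γ μ' Q ≤ policyBellman F L γ μ Q := fun z a => by
  unfold policyBellman
  gcongr
  exact hgreedy _ _

lemma iterate_policyBellman_le (hγ : 0 ≤ γ) {μ : Z → U} {Q : Z → U → ℝ}
    (hQ : policyBellman F L γ μ Q ≤ Q) {m n : ℕ} (hmn : m ≤ n) :
    (policyBellman F L γ μ)^[n] Q ≤ (policyBellman F L γ μ)^[m] Q :=
  (monotone_policyBellman hγ μ).antitone_iterate_of_map_le hQ hmn

lemma sum_trajectory_eq_iterate_policyBellman (μ : Z → U) {z : Z} {a : U} {x : ℕ → Z}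
    (hx1 : x 1 = F z a) (hx : ∀ l, 1 ≤ l → x (l + 1) = F (x l) (μ (x l)))
    {n : ℕ} (hn : 1 ≤ n) (Q : Z → U → ℝ) :
    L z a + (∑ l ∈ Finset.Ico 1 n, γ ^ l * L (x l) (μ (x l))) + γ ^ n * Q (x n) (μ (x n)) =
      (policyBellman F L γ μ)^[n] Q z a := by
  induction n, hn using Nat.le_induction generalizing Q with
  | base => simp [policyBellman, hx1]
  | succ n hn ih =>
    rw [Function.iterate_succ_apply, ← ih, Finset.sum_Ico_succ_top hn, policyBellman, ← hx n hn]
    ring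

end ValueIteration

open ValueIteration in
theorem stmt1_general {Z U : Type*} (F : Z → U → Z) (L : Z → U → ℝ) (γ : ℝ)
    (hγ : 0 < γ)
    (H : ℕ → ℕ) (hH : ∀ i, 1 ≤ H i)
    (Q : ℕ → Z → U → ℝ) (μ : ℕ → Z → U)
    (hgreedy : ∀ i z v, Q i z (μ i z) ≤ Q i z v)
    -- trajectory generated from (z,a) at iteration i: z₁ = F(z,a),
    -- z_{l+1} = F(z_l, μⁱ(z_l)) for l ≥ 1
    (zseq : ℕ → Z → U → ℕ → Z)
    (hz1 : ∀ i z a, zseq i z a 1 = F z a)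
    (hzl : ∀ i z a l, 1 ≤ l →
      zseq i z a (l + 1) = F (zseq i z a l) (μ i (zseq i z a l)))
    -- multi-step policy evaluation
    (hupd : ∀ i z a, Q (i + 1) z a =
      L z a + (∑ l ∈ Finset.Ico 1 (H i),
        γ ^ l * L (zseq i z a l) (μ i (zseq i z a l)))
      + γ ^ (H i) * Q i (zseq i z a (H i)) (μ i (zseq i z a (H i))))
    -- initialization condition (12)
    (hinit : ∀ z a, L z a + γ * Q 0 (F z a) (μ 0 (F z a)) ≤ Q 0 z a) :
    (∀ i z a, Q (i + 1) z a ≤ L z a + γ * Q i (F z a) (μ i (F z a)) ∧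
      L z a + γ * Q i (F z a) (μ i (F z a)) ≤ Q i z a) ∧
    (∀ i z a, Q (i + 1) z a ≤ Q i z a) := by
  set T := fun i => policyBellman F L γ (μ i)
  have hQ : ∀ i, Q (i + 1) = (T i)^[H i] (Q i) := fun i => funext₂ fun z a => by
    rw [hupd]
    exact sum_trajectory_eq_iterate_policyBellman _ (hz1 i z a) (hzl i z a) (hH i) _
  have hbellman : ∀ i, T i (Q i) ≤ Q i := by
    intro i
    induction i with
    | zero => exact hinit
    | succ i ih =>
      calc T (i + 1) (Q (i + 1)) ≤ T i (Q (i + 1)) :=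
            policyBellman_le_of_greedy hγ.le (hgreedy (i + 1)) (μ i)
        _ = (T i)^[H i + 1] (Q i) := by rw [hQ, Function.iterate_succ_apply']
        _ ≤ (T i)^[H i] (Q i) := iterate_policyBellman_le hγ.le ih (Nat.le_succ _)
        _ = Q (i + 1) := (hQ i).symm
  have hdecrease : ∀ i, Q (i + 1) ≤ T i (Q i) := fun i => by
    rw [hQ]
    exact iterate_policyBellman_le hγ.le (hbellman i) (hH i)
  exact ⟨fun i z a => ⟨hdecrease i z a, hbellman i z a⟩,
    fun i z a => (hdecrease i z a).trans (hbellman i z a)⟩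

/-- multi-step value iteration with horizons `H i ≥ 1`.
If `Q⁰(z,a) ≥ L(z,a) + γ min_v Q⁰(F(z,a),v)` then for every `i`,
`Qⁱ⁺¹ ≤ L + γ min_v Qⁱ(F(z,a),·) ≤ Qⁱ`; in particular `(Qⁱ)` is
pointwise nonincreasing. The minimum of `Qⁱ(z,·)` is attained by the
greedy policy `μ i`. -/
theorem stmt1 {Z U : Type*} (F : Z → U → Z) (L : Z → U → ℝ) (γ : ℝ)
    (hγ : 0 < γ) (hγ1 : γ ≤ 1) (hL : ∀ z a, 0 ≤ L z a)
    (H : ℕ → ℕ) (hH : ∀ i, 1 ≤ H i)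
    (Q : ℕ → Z → U → ℝ) (μ : ℕ → Z → U)
    (hgreedy : ∀ i z v, Q i z (μ i z) ≤ Q i z v)
    -- trajectory generated from (z,a) at iteration i: z₁ = F(z,a),
    -- z_{l+1} = F(z_l, μⁱ(z_l)) for l ≥ 1
    (zseq : ℕ → Z → U → ℕ → Z)
    (hz1 : ∀ i z a, zseq i z a 1 = F z a)
    (hzl : ∀ i z a l, 1 ≤ l →
      zseq i z a (l + 1) = F (zseq i z a l) (μ i (zseq i z a l)))
    -- multi-step policy evaluation
    (hupd : ∀ i z a, Q (i + 1) z a =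
      L z a + (∑ l ∈ Finset.Ico 1 (H i),
        γ ^ l * L (zseq i z a l) (μ i (zseq i z a l)))
      + γ ^ (H i) * Q i (zseq i z a (H i)) (μ i (zseq i z a (H i))))
    -- initialization condition (12)
    (hinit : ∀ z a, L z a + γ * Q 0 (F z a) (μ 0 (F z a)) ≤ Q 0 z a) :
    (∀ i z a, Q (i + 1) z a ≤ L z a + γ * Q i (F z a) (μ i (F z a)) ∧
      L z a + γ * Q i (F z a) (μ i (F z a)) ≤ Q i z a) ∧
    (∀ i z a, Q (i + 1) z a ≤ Q i z a) :=
  stmt1_general F L γ hγ H hH Q μ hgreedy zseq hz1 hzl hupd hinit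
end

section
/- Let (Qⁱ) be the sequence generated by multi-step value iteration with horizons Hᵢ ≥ 1, and (Qⁱ_VI) the sequence generated by standard value iteration (Hᵢ = 1 for all i), both with greedy policy improvement. If Q⁰ satisfies the initialization condition Q⁰(z,a) ≥ L(z,a) + γ min_v Q⁰(F(z,a), v) and Q⁰(z,a) ≤ Q⁰_VI(z,a) for all (z,a), then Qⁱ(z,a) ≤ Qⁱ_VI(z,a) for all i and all (z,a). -/
/-- Corollary 1: the multi-step VI iterates are dominated by
the standard (H=1) VI iterates: if `Q⁰ ≥ 𝒟Q⁰` and `Q⁰ ≤ Q⁰_VI` then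
`Qⁱ ≤ Qⁱ_VI` for all `i`. -/
theorem stmt3 {Z U : Type*} (F : Z → U → Z) (L : Z → U → ℝ) (γ : ℝ)
    (hγ : 0 < γ) (hγ1 : γ ≤ 1) (hL : ∀ z a, 0 ≤ L z a)
    (H : ℕ → ℕ) (hH : ∀ i, 1 ≤ H i)
    -- multi-step VI sequence
    (Q : ℕ → Z → U → ℝ) (μ : ℕ → Z → U)
    (hgreedy : ∀ i z v, Q i z (μ i z) ≤ Q i z v)
    (zseq : ℕ → Z → U → ℕ → Z)
    (hz1 : ∀ i z a, zseq i z a 1 = F z a)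
    (hzl : ∀ i z a l, 1 ≤ l →
      zseq i z a (l + 1) = F (zseq i z a l) (μ i (zseq i z a l)))
    (hupd : ∀ i z a, Q (i + 1) z a =
      L z a + (∑ l ∈ Finset.Ico 1 (H i),
        γ ^ l * L (zseq i z a l) (μ i (zseq i z a l)))
      + γ ^ (H i) * Q i (zseq i z a (H i)) (μ i (zseq i z a (H i))))
    (hinit : ∀ z a, L z a + γ * Q 0 (F z a) (μ 0 (F z a)) ≤ Q 0 z a)
    -- standard VI sequence
    (QVI : ℕ → Z → U → ℝ) (ν : ℕ → Z → U)
    (hgreedyVI : ∀ i z v, QVI i z (ν i z) ≤ QVI i z v)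
    (hupdVI : ∀ i z a, QVI (i + 1) z a =
      L z a + γ * QVI i (F z a) (ν i (F z a)))
    -- initial comparison
    (h0 : ∀ z a, Q 0 z a ≤ QVI 0 z a) :
    ∀ i z a, Q i z a ≤ QVI i z a := by
  have key : ∀ i,
      (∀ z a, L z a + γ * Q i (F z a) (μ i (F z a)) ≤ Q i z a) ∧
      (∀ z a, Q i z a ≤ QVI i z a) := by
    intro i
    induction i with
    | zero => exact ⟨hinit, h0⟩
    | succ i ih =>
      obtain ⟨hcons, hle⟩ := ih
      -- the "partial rollout" value with horizon n
      set P : Z → U → ℕ → ℝ := fun z a n =>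
        L z a + (∑ l ∈ Finset.Ico 1 n,
          γ ^ l * L (zseq i z a l) (μ i (zseq i z a l)))
        + γ ^ n * Q i (zseq i z a n) (μ i (zseq i z a n)) with hPdef
      have hstep : ∀ z a n, 1 ≤ n → P z a (n + 1) ≤ P z a n := by
        intro z a n hn
        have hc := hcons (zseq i z a n) (μ i (zseq i z a n))
        have hc2 := mul_le_mul_of_nonneg_left hc (pow_nonneg hγ.le n)
        simp only [hPdef]
        rw [Finset.sum_Ico_succ_top hn, hzl i z a n hn, pow_succ]
        nlinarith [hc2]
      have hmono : ∀ z a n, 1 ≤ n → P z a n ≤ P z a 1 := by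
        intro z a n hn
        induction n, hn using Nat.le_induction with
        | base => exact le_refl _
        | succ n hn ih => exact le_trans (hstep z a n hn) ih
      have hP1 : ∀ z a, P z a 1 = L z a + γ * Q i (F z a) (μ i (F z a)) := by
        intro z a
        simp [hPdef, hz1]
      have hQP : ∀ z a, Q (i + 1) z a = P z a (H i) := by
        intro z a; rw [hupd]
      have hub : ∀ z a, Q (i + 1) z a ≤ L z a + γ * Q i (F z a) (μ i (F z a)) := by
        intro z a
        rw [hQP, ← hP1]
        exact hmono z a (H i) (hH i)
      constructor
      · -- consistency propagates
        intro z a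
        have hshift : ∀ l, 1 ≤ l →
            zseq i (F z a) (μ i (F z a)) l = zseq i z a (l + 1) := by
          intro l hl
          induction l, hl using Nat.le_induction with
          | base =>
            rw [hz1, ← hz1 i z a, ← hzl i z a 1 le_rfl]
          | succ l hl ih =>
            rw [hzl i (F z a) (μ i (F z a)) l hl, ih,
              ← hzl i z a (l + 1) (le_trans hl (Nat.le_succ l))]
        -- L z a + γ * Q (i+1) (F z a) (μ i (F z a)) = P z a (H i + 1)
        have hkey : L z a + γ * Q (i + 1) (F z a) (μ i (F z a)) = P z a (H i + 1) := by
          rw [hupd i (F z a) (μ i (F z a))]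
          simp only [hPdef]
          have hs : ∀ l ∈ Finset.Ico 1 (H i),
              γ ^ l * L (zseq i (F z a) (μ i (F z a)) l)
                  (μ i (zseq i (F z a) (μ i (F z a)) l))
              = γ ^ l * L (zseq i z a (l + 1)) (μ i (zseq i z a (l + 1))) := by
            intro l hl
            rw [hshift l (Finset.mem_Ico.mp hl).1]
          rw [Finset.sum_congr rfl hs, hshift (H i) (hH i)]
          have hbot : (∑ l ∈ Finset.Ico 1 (H i + 1),
              γ ^ l * L (zseq i z a l) (μ i (zseq i z a l)))
              = γ ^ 1 * L (zseq i z a 1) (μ i (zseq i z a 1)) +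
                ∑ l ∈ Finset.Ico 2 (H i + 1),
                  γ ^ l * L (zseq i z a l) (μ i (zseq i z a l)) := by
            exact Finset.sum_eq_sum_Ico_succ_bot (Nat.lt_succ_of_le (hH i)) _
          have hre : (∑ l ∈ Finset.Ico 2 (H i + 1),
                γ ^ l * L (zseq i z a l) (μ i (zseq i z a l)))
              = ∑ l ∈ Finset.Ico 1 (H i),
                  γ ^ (l + 1) * L (zseq i z a (l + 1)) (μ i (zseq i z a (l + 1))) := by
            rw [Finset.sum_Ico_add' (fun l =>
              γ ^ l * L (zseq i z a l) (μ i (zseq i z a l))) 1 (H i) 1]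
          rw [hbot, hre, hz1, ← hz1 i z a]
          have hterm : ∀ x ∈ Finset.Ico 1 (H i),
              γ * (γ ^ x * L (zseq i z a (x + 1)) (μ i (zseq i z a (x + 1))))
              = γ ^ (x + 1) * L (zseq i z a (x + 1)) (μ i (zseq i z a (x + 1))) := by
            intro x _; ring
          rw [mul_add, mul_add, Finset.mul_sum, Finset.sum_congr rfl hterm, pow_succ,
            pow_succ γ (H i)]
          ring
        have hg := hgreedy (i + 1) (F z a) (μ i (F z a))
        have hg2 : L z a + γ * Q (i + 1) (F z a) (μ (i + 1) (F z a)) ≤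
            L z a + γ * Q (i + 1) (F z a) (μ i (F z a)) := by
          have := mul_le_mul_of_nonneg_left hg hγ.le
          linarith
        calc L z a + γ * Q (i + 1) (F z a) (μ (i + 1) (F z a))
            ≤ L z a + γ * Q (i + 1) (F z a) (μ i (F z a)) := hg2
          _ = P z a (H i + 1) := hkey
          _ ≤ P z a (H i) := hstep z a (H i) (hH i)
          _ = Q (i + 1) z a := (hQP z a).symm
      · -- comparison with standard VI
        intro z a
        have h1 := hub z a
        have h2 := hgreedy i (F z a) (ν i (F z a))
        have h3 := hle (F z a) (ν i (F z a))
        have h4 := mul_le_mul_of_nonneg_left (le_trans h2 h3) hγ.le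
        rw [hupdVI]
        linarith
  intro i
  exact (key i).2
end

section
/- Let (Qⁱ) be generated by multi-step value iteration with horizons Hᵢ ≥ 1 from an initialization Q⁰ satisfying Q⁰ ≥ 𝒟Q⁰ (i.e. Q⁰(z,a) ≥ L(z,a) + γ min_v Q⁰(F(z,a),v)). Then every iterate satisfies the same condition: Qⁱ(z,a) ≥ L(z,a) + γ min_v Qⁱ(F(z,a), v) for all i ≥ 1 and all (z,a). -/
/-- Auxiliary sum shift identity. -/
lemma stmt15_aux (γ : ℝ) (g : ℕ → ℝ) :
    ∀ n, 1 ≤ n → ∑ l ∈ Finset.Ico 1 (n + 1), γ ^ l * g l =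
      γ * g 1 + γ * ∑ l ∈ Finset.Ico 1 n, γ ^ l * g (l + 1) := by
  intro n hn
  induction n with
  | zero => omega
  | succ n ih =>
    rcases Nat.eq_zero_or_pos n with h0 | h1
    · subst h0; simp [Finset.sum_Ico_succ_top]
    · rw [Finset.sum_Ico_succ_top (by omega), ih h1,
        Finset.sum_Ico_succ_top (by omega : 1 ≤ n)]
      ring

/-- every iterate of the multi-step value iteration inherits
the initialization condition: `Qⁱ(z,a) ≥ L(z,a) + γ min_v Qⁱ(F(z,a),v)`
for all `i ≥ 1` (inequality (17) in Theorem 1). -/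
theorem stmt15 {Z U : Type*} (F : Z → U → Z) (L : Z → U → ℝ) (γ : ℝ)
    (hγ : 0 < γ) (hγ1 : γ ≤ 1) (hL : ∀ z a, 0 ≤ L z a)
    (H : ℕ → ℕ) (hH : ∀ i, 1 ≤ H i)
    (Q : ℕ → Z → U → ℝ) (μ : ℕ → Z → U)
    (hgreedy : ∀ i z v, Q i z (μ i z) ≤ Q i z v)
    (zseq : ℕ → Z → U → ℕ → Z)
    (hz1 : ∀ i z a, zseq i z a 1 = F z a)
    (hzl : ∀ i z a l, 1 ≤ l →
      zseq i z a (l + 1) = F (zseq i z a l) (μ i (zseq i z a l)))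
    (hupd : ∀ i z a, Q (i + 1) z a =
      L z a + (∑ l ∈ Finset.Ico 1 (H i),
        γ ^ l * L (zseq i z a l) (μ i (zseq i z a l)))
      + γ ^ (H i) * Q i (zseq i z a (H i)) (μ i (zseq i z a (H i))))
    (hinit : ∀ z a, L z a + γ * Q 0 (F z a) (μ 0 (F z a)) ≤ Q 0 z a) :
    ∀ i, 1 ≤ i → ∀ z a,
      L z a + γ * Q i (F z a) (μ i (F z a)) ≤ Q i z a := by
  suffices h : ∀ i z a, L z a + γ * Q i (F z a) (μ i (F z a)) ≤ Q i z a by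
    intro i _ z a; exact h i z a
  intro i
  induction i with
  | zero => exact hinit
  | succ i ih =>
    intro z a
    set w : ℕ → Z := zseq i z a with hw
    set g : ℕ → ℝ := fun l => L (w l) (μ i (w l)) with hg
    have hshift : ∀ l, 1 ≤ l → zseq i (F z a) (μ i (F z a)) l = w (l + 1) := by
      intro l hl
      induction l with
      | zero => omega
      | succ l ihl =>
        rcases Nat.eq_zero_or_pos l with h0 | h1
        · subst h0
          rw [hz1, hw, hzl i z a 1 le_rfl, hz1]
        · rw [hzl i (F z a) (μ i (F z a)) l h1, ihl h1, hw,
            hzl i z a (l + 1) (by omega)]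
    have key : L z a + γ * Q (i + 1) (F z a) (μ i (F z a)) ≤ Q (i + 1) z a := by
      rw [hupd i z a, hupd i (F z a) (μ i (F z a))]
      have hsumeq : ∑ l ∈ Finset.Ico 1 (H i),
          γ ^ l * L (zseq i (F z a) (μ i (F z a)) l) (μ i (zseq i (F z a) (μ i (F z a)) l))
          = ∑ l ∈ Finset.Ico 1 (H i), γ ^ l * g (l + 1) := by
        refine Finset.sum_congr rfl fun l hl => ?_
        have hl1 : 1 ≤ l := (Finset.mem_Ico.mp hl).1
        rw [hshift l hl1, hg]
      rw [hsumeq, hshift (H i) (hH i)]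
      -- step inequality at the tail
      have hstep : g (H i) + γ * Q i (w (H i + 1)) (μ i (w (H i + 1)))
          ≤ Q i (w (H i)) (μ i (w (H i))) := by
        have hF : w (H i + 1) = F (w (H i)) (μ i (w (H i))) := hzl i z a (H i) (hH i)
        have := ih (w (H i)) (μ i (w (H i)))
        rw [← hF] at this
        exact this
      have hsum : ∑ l ∈ Finset.Ico 1 (H i + 1), γ ^ l * g l =
          γ * g 1 + γ * ∑ l ∈ Finset.Ico 1 (H i), γ ^ l * g (l + 1) :=
        stmt15_aux γ g (H i) (hH i)
      have htop : ∑ l ∈ Finset.Ico 1 (H i + 1), γ ^ l * g l =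
          (∑ l ∈ Finset.Ico 1 (H i), γ ^ l * g l) + γ ^ (H i) * g (H i) :=
        Finset.sum_Ico_succ_top (hH i) _
      have hg1 : L (F z a) (μ i (F z a)) = g 1 := by simp only [hg, hw, hz1]
      have hmul : γ ^ (H i) * (g (H i) + γ * Q i (w (H i + 1)) (μ i (w (H i + 1))))
          ≤ γ ^ (H i) * Q i (w (H i)) (μ i (w (H i))) :=
        mul_le_mul_of_nonneg_left hstep (pow_nonneg hγ.le _)
      have hsum2 : ∑ l ∈ Finset.Ico 1 (H i),
          γ ^ l * L (w l) (μ i (w l)) = ∑ l ∈ Finset.Ico 1 (H i), γ ^ l * g l := rfl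
      rw [hg1, hsum2]
      nlinarith [hmul, hsum, htop]
    calc L z a + γ * Q (i + 1) (F z a) (μ (i + 1) (F z a))
        ≤ L z a + γ * Q (i + 1) (F z a) (μ i (F z a)) := by
          have := hgreedy (i + 1) (F z a) (μ i (F z a))
          nlinarith
      _ ≤ Q (i + 1) z a := key
end

section
/- Every iterate of the multi-step value iteration dominates the optimal Q-function: if Q⁰ is bounded and satisfies Q⁰ ≥ 𝒟Q⁰, then Qⁱ(z,a) ≥ Q⋆(z,a) for all i and all (z,a), where Q⋆ is the unique bounded fixed point of the Bellman operator 𝒟. Consequently the pointwise limit of the nonincreasing sequence (Qⁱ) is at least Q⋆. -/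
/-- every iterate of multi-step value iteration dominates the
optimal Q-function: `Qⁱ ≥ Q⋆` for all `i`; consequently any pointwise limit
of the sequence is at least `Q⋆`. -/
theorem stmt16 {Z U : Type*} [Fintype U] [Nonempty U]
    (F : Z → U → Z) (L : Z → U → ℝ) (γ : ℝ)
    (hγ : 0 < γ) (hγ1 : γ < 1)
    (hL : ∀ z a, 0 ≤ L z a) (M : ℝ) (hLM : ∀ z a, L z a ≤ M)
    (H : ℕ → ℕ) (hH : ∀ i, 1 ≤ H i)
    (Q : ℕ → Z → U → ℝ) (μ : ℕ → Z → U)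
    (hgreedy : ∀ i z v, Q i z (μ i z) ≤ Q i z v)
    (hQ0b : ∃ C, ∀ z a, |Q 0 z a| ≤ C)
    (zseq : ℕ → Z → U → ℕ → Z)
    (hz1 : ∀ i z a, zseq i z a 1 = F z a)
    (hzl : ∀ i z a l, 1 ≤ l →
      zseq i z a (l + 1) = F (zseq i z a l) (μ i (zseq i z a l)))
    (hupd : ∀ i z a, Q (i + 1) z a =
      L z a + (∑ l ∈ Finset.Ico 1 (H i),
        γ ^ l * L (zseq i z a l) (μ i (zseq i z a l)))
      + γ ^ (H i) * Q i (zseq i z a (H i)) (μ i (zseq i z a (H i))))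
    (hinit : ∀ z a, L z a + γ * Q 0 (F z a) (μ 0 (F z a)) ≤ Q 0 z a)
    -- the optimal Q-function: unique bounded fixed point of 𝒟
    (Qstar : Z → U → ℝ) (hQsb : ∃ C, ∀ z a, |Qstar z a| ≤ C)
    (hfix : ∀ z a, Qstar z a = L z a + γ * ⨅ v, Qstar (F z a) v)
    (huniq : ∀ Q' : Z → U → ℝ, (∃ C, ∀ z a, |Q' z a| ≤ C) →
      (∀ z a, Q' z a = L z a + γ * ⨅ v, Q' (F z a) v) → Q' = Qstar) :
    (∀ i z a, Qstar z a ≤ Q i z a) ∧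
    (∀ Qinf : Z → U → ℝ,
      (∀ z a, Filter.Tendsto (fun i => Q i z a) Filter.atTop (nhds (Qinf z a))) →
      ∀ z a, Qstar z a ≤ Qinf z a) := by
  classical
  have bdd : ∀ (g : U → ℝ), BddBelow (Set.range g) := fun g => (Set.finite_range g).bddBelow
  have hstar_le : ∀ z a v, Qstar z a ≤ L z a + γ * Qstar (F z a) v := by
    intro z a v
    rw [hfix z a]
    have h : (⨅ v, Qstar (F z a) v) ≤ Qstar (F z a) v := ciInf_le (bdd _) v
    nlinarith
  have base : ∀ z a, Qstar z a ≤ Q 0 z a := by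
    intro z a
    obtain ⟨C, hC⟩ := hQ0b
    obtain ⟨C', hC'⟩ := hQsb
    set S : Set ℝ := Set.range (fun p : Z × U => Q 0 p.1 p.2 - Qstar p.1 p.2) with hS
    have hSne : S.Nonempty := ⟨_, ⟨(z, Classical.arbitrary U), rfl⟩⟩
    have hSbdd : BddBelow S := by
      refine ⟨-(C + C'), ?_⟩
      rintro x ⟨p, rfl⟩
      have h1 := abs_le.mp (hC p.1 p.2)
      have h2 := abs_le.mp (hC' p.1 p.2)
      simp only
      linarith [h1.1, h2.2]
    set d := sInf S with hd
    have hmem : ∀ z' a', d ≤ Q 0 z' a' - Qstar z' a' := fun z' a' =>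
      csInf_le hSbdd ⟨(z', a'), rfl⟩
    have key : ∀ z' a', γ * d ≤ Q 0 z' a' - Qstar z' a' := by
      intro z' a'
      have h1 := hinit z' a'
      have h2 : Qstar z' a' ≤ L z' a' + γ * Qstar (F z' a') (μ 0 (F z' a')) :=
        hstar_le z' a' _
      have h3 := hmem (F z' a') (μ 0 (F z' a'))
      nlinarith
    have hdd : γ * d ≤ d := le_csInf hSne (by rintro x ⟨p, rfl⟩; exact key p.1 p.2)
    have hd0 : 0 ≤ d := by nlinarith
    linarith [hmem z a]
  have unroll : ∀ i z a n, 1 ≤ n →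
      Qstar z a ≤ L z a + (∑ l ∈ Finset.Ico 1 n,
        γ ^ l * L (zseq i z a l) (μ i (zseq i z a l)))
        + γ ^ n * Qstar (zseq i z a n) (μ i (zseq i z a n)) := by
    intro i z a n hn
    induction n, hn using Nat.le_induction with
    | base =>
      simp only [Finset.Ico_self, Finset.sum_empty, add_zero, pow_one]
      have h := hstar_le z a (μ i (F z a))
      rw [hz1 i z a]
      linarith
    | succ n hn ih =>
      have hst := hstar_le (zseq i z a n) (μ i (zseq i z a n)) (μ i (zseq i z a (n+1)))
      rw [← hzl i z a n hn] at hst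
      have hpow : (0:ℝ) ≤ γ ^ n := by positivity
      have hkey : γ ^ n * Qstar (zseq i z a n) (μ i (zseq i z a n)) ≤
          γ ^ n * L (zseq i z a n) (μ i (zseq i z a n)) +
          γ ^ (n+1) * Qstar (zseq i z a (n+1)) (μ i (zseq i z a (n+1))) := by
        have h := mul_le_mul_of_nonneg_left hst hpow
        rw [mul_add] at h
        rw [pow_succ γ n, mul_assoc]
        linarith
      rw [Finset.sum_Ico_succ_top hn]
      linarith
  have main : ∀ i z a, Qstar z a ≤ Q i z a := by
    intro i
    induction i with
    | zero => exact base
    | succ i ih =>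
      intro z a
      rw [hupd i z a]
      have h1 := unroll i z a (H i) (hH i)
      have h2 := ih (zseq i z a (H i)) (μ i (zseq i z a (H i)))
      have hpow : (0:ℝ) ≤ γ ^ (H i) := by positivity
      nlinarith
  exact ⟨main, fun Qinf htend z a =>
    ge_of_tendsto (htend z a) (Filter.Eventually.of_forall fun i => main i z a)⟩
end
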